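/- arXiv:2212.14105 — 2 statements merged into one kernel-verified Lean document; each statement's English description precedes it below -/
import Mathlib

section
/- Stratified identification with nonnegative weights: if (X, Y0, Y1, D0, D1) is independent of Z conditional on a discrete covariate W, with 0 < P(Z=1|W) < 1, the conditional reduced form RF_W = E[Y|Z=1,W] − E[Y|Z=0,W] nonnegative for all W and positive for some W, treatment monotonicity, exclusion, and E[Z|W] equal to the linear projection of Z on W, then E[h(X)·Y·Z̃]/E[Y·Z̃] = E[ω_W · E[h(X) | D1>D0, Y1>Y0, W]] / E[ω_W], where Z̃ = Z − E[Z|W] and ω_W = RF_W·(1−E[Z|W])·E[Z|W] ≥ 0 for all W. -/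
/-
Fix a stratum `W = w` of positive mass and work under `ν = μ[|W = w]`, writing `p = E_ν[Z]`.
Since `Z` is binary, `Y = Z·A + (1 - Z)·B` with `A = Y(D₁)`, `B = Y(D₀)` functions of
`(X, Y₀, Y₁, D₀, D₁)`, which is independent of `Z`. Hence
`E_ν[k·Y·(Z - p)] = p(1 - p)·E_ν[k·(A - B)]` for `k = h(X)` and `k = 1`, and
`RF_w·(1 - p)·p = p(1 - p)·(E_ν[A] - E_ν[B])`. Under both monotonicity assumptions
`A - B = (D₁ - D₀)(Y₁ - Y₀)` is the indicator of the supercompliers `D₀ < D₁ ∧ Y₀ < Y₁`, so the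
stratum averages of the numerator and denominator integrands are
`ω_w·E[h(X) | supercomplier, w]` and `ω_w`. The tower property over the countably many strata
gives the identity; `ω_W ≥ 0` because `RF_W ≥ 0` and `0 ≤ E[Z | W] ≤ 1`.
-/

open MeasureTheory ProbabilityTheory

/-- Conditional mean of `f` given event `s`. -/
noncomputable def cmean {Ω : Type} [MeasurableSpace Ω] (μ : Measure Ω)
    (f : Ω → ℝ) (s : Set Ω) : ℝ :=
  (∫ ω in s, f ω ∂μ) / (μ s).toReal

open Set

lemma Measurable.comp_of_countable_range {Ω α β : Type*} [MeasurableSpace Ω] [MeasurableSpace α]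
    [MeasurableSingletonClass α] [MeasurableSpace β] {W : Ω → α} (hW : Measurable W)
    (hWc : (range W).Countable) (g : α → β) : Measurable fun ω => g (W ω) :=
  have : Countable (range W) := hWc.to_subtype
  (measurable_of_countable fun w : range W => g w).comp (hW.subtype_mk (h := mem_range_self))

lemma MeasureTheory.Integrable.binary_mul {Ω : Type*} [MeasurableSpace Ω] {μ : Measure Ω}
    {Z A : Ω → ℝ} (hA : Integrable A μ) (hZm : Measurable Z) (hZ : ∀ ω, Z ω = 0 ∨ Z ω = 1) :
    Integrable (fun ω => Z ω * A ω) μ :=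
  hA.bdd_mul hZm.aestronglyMeasurable (c := 1)
    (ae_of_all _ fun ω => by rcases hZ ω with h | h <;> simp [h])

lemma mem_Icc_of_binary {x : ℝ} (hx : x = 0 ∨ x = 1) : x ∈ Icc (0 : ℝ) 1 := by
  rcases hx with rfl | rfl <;> simp

lemma MeasureTheory.Integrable.mul_mul_sub_of_mem_Icc {Ω : Type*} [MeasurableSpace Ω]
    {μ : Measure Ω} {k Y Z e : Ω → ℝ} (hk : Integrable k μ) (hYm : Measurable Y)
    (hZm : Measurable Z) (hem : Measurable e) (hY : ∀ ω, Y ω ∈ Icc (0 : ℝ) 1)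
    (hZ : ∀ ω, Z ω ∈ Icc (0 : ℝ) 1) (he : ∀ ω, e ω ∈ Icc (0 : ℝ) 1) :
    Integrable (fun ω => k ω * Y ω * (Z ω - e ω)) μ := by
  have hbound : ∀ ω, ‖Y ω * (Z ω - e ω)‖ ≤ 1 := fun ω => by
    rw [Real.norm_eq_abs, abs_mul, ← one_mul (1 : ℝ)]
    exact mul_le_mul (abs_le.2 ⟨by linarith [(hY ω).1], (hY ω).2⟩)
      (abs_sub_le_iff.2 ⟨by linarith [(hZ ω).2, (he ω).1], by linarith [(hZ ω).1, (he ω).2]⟩)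
      (abs_nonneg _) zero_le_one
  simpa only [mul_assoc, Pi.mul_apply, Pi.sub_apply] using
    hk.mul_bdd (hYm.mul (hZm.sub hem)).aestronglyMeasurable (ae_of_all _ hbound)

lemma mix_eq_zero_or_one {z a b : ℝ} (hz : z = 0 ∨ z = 1) (ha : a = 0 ∨ a = 1)
    (hb : b = 0 ∨ b = 1) :
    z * a + (1 - z) * b = 0 ∨ z * a + (1 - z) * b = 1 := by
  rcases hz with rfl | rfl <;> simpa

lemma mix_mix_eq_of_binary {z d₀ d₁ y₀ y₁ : ℝ} (hz : z = 0 ∨ z = 1) :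
    (z * d₁ + (1 - z) * d₀) * y₁ + (1 - (z * d₁ + (1 - z) * d₀)) * y₀
      = z * (d₁ * y₁ + (1 - d₁) * y₀) + (1 - z) * (d₀ * y₁ + (1 - d₀) * y₀) := by
  rcases hz with rfl | rfl <;> ring

lemma mix_sub_mix_eq_ite {d₀ d₁ y₀ y₁ : ℝ} (hd₀ : d₀ = 0 ∨ d₀ = 1) (hd₁ : d₁ = 0 ∨ d₁ = 1)
    (hy₀ : y₀ = 0 ∨ y₀ = 1) (hy₁ : y₁ = 0 ∨ y₁ = 1) (hd : d₀ ≤ d₁) (hy : y₀ ≤ y₁) :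
    (d₁ * y₁ + (1 - d₁) * y₀) - (d₀ * y₁ + (1 - d₀) * y₀)
      = if d₀ < d₁ ∧ y₀ < y₁ then 1 else 0 := by
  rcases hd₀ with rfl | rfl <;> rcases hd₁ with rfl | rfl <;> rcases hy₀ with rfl | rfl <;>
    rcases hy₁ with rfl | rfl <;> norm_num at *

section CondMean

variable {Ω : Type} [MeasurableSpace Ω] {μ : Measure Ω} {f g : Ω → ℝ} {s t : Set Ω}

lemma cmean_eq_integral_cond (μ : Measure Ω) (f : Ω → ℝ) (s : Set Ω) :
    cmean μ f s = ∫ ω, f ω ∂μ[|s] := by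
  rw [ProbabilityTheory.cond, integral_smul_measure, ENNReal.toReal_inv, cmean, smul_eq_mul,
    div_eq_inv_mul]

lemma cmean_of_measure_eq_zero (hs : μ s = 0) (f : Ω → ℝ) : cmean μ f s = 0 := by
  rw [cmean, Measure.restrict_eq_zero.mpr hs, integral_zero_measure, zero_div]

lemma cmean_mul_measureReal [IsFiniteMeasure μ] (f : Ω → ℝ) (s : Set Ω) :
    cmean μ f s * μ.real s = ∫ ω in s, f ω ∂μ :=
  div_mul_cancel_of_imp fun hs => by
    rw [Measure.restrict_eq_zero.mpr ((measureReal_eq_zero_iff).mp hs), integral_zero_measure]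

lemma cmean_cond [IsFiniteMeasure μ] (hs : MeasurableSet s) (ht : MeasurableSet t) (f : Ω → ℝ) :
    cmean μ[|s] f t = cmean μ f (s ∩ t) := by
  rw [cmean_eq_integral_cond, cmean_eq_integral_cond, cond_cond_eq_cond_inter hs ht]

lemma cmean_mem_Icc [IsFiniteMeasure μ] (hfm : Measurable f) (hf : ∀ ω, f ω ∈ Icc (0 : ℝ) 1)
    (s : Set Ω) : cmean μ f s ∈ Icc (0 : ℝ) 1 := by
  have hfi : Integrable f μ :=
    .of_bound hfm.aestronglyMeasurable 1 (ae_of_all _ fun ω => by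
      rw [Real.norm_of_nonneg (hf ω).1]; exact (hf ω).2)
  have hint_le : ∫ ω in s, f ω ∂μ ≤ μ.real s := by
    simpa using setIntegral_mono hfi.integrableOn (integrable_const (1 : ℝ)).integrableOn
      fun ω => (hf ω).2
  refine ⟨div_nonneg ?_ ENNReal.toReal_nonneg, div_le_one_of_le₀ hint_le ENNReal.toReal_nonneg⟩
  exact setIntegral_nonneg_of_ae (ae_of_all _ fun ω => (hf ω).1)

variable {ι : Type*} [Countable ι] {S : ι → Set Ω}

lemma integrable_of_eqOn_cmean [IsFiniteMeasure μ] (hSm : ∀ i, MeasurableSet (S i))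
    (hSd : Pairwise (Function.onFun Disjoint S)) (hScover : ⋃ i, S i = univ)
    (hg : ∀ i, EqOn g (fun _ => cmean μ f (S i)) (S i)) (hf : Integrable f μ) :
    Integrable g μ := by
  rw [← integrableOn_univ, ← hScover]
  refine integrableOn_iUnion_of_summable_integral_norm
    (fun i => (integrableOn_const (C := cmean μ f (S i))).congr_fun (hg i).symm (hSm i)) ?_
  have hnorm : HasSum (fun i => ∫ ω in S i, ‖f ω‖ ∂μ) (∫ ω in ⋃ i, S i, ‖f ω‖ ∂μ) :=
    hasSum_integral_iUnion hSm hSd hf.norm.integrableOn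
  refine hnorm.summable.of_nonneg_of_le (fun i => integral_nonneg fun _ => norm_nonneg _)
    fun i => ?_
  calc ∫ ω in S i, ‖g ω‖ ∂μ = ‖cmean μ f (S i) * μ.real (S i)‖ := by
        rw [setIntegral_congr_fun (hSm i) fun ω hω => congrArg norm (hg i hω), setIntegral_const,
          smul_eq_mul, norm_mul, Real.norm_of_nonneg measureReal_nonneg, mul_comm]
    _ ≤ ∫ ω in S i, ‖f ω‖ ∂μ := by
        rw [cmean_mul_measureReal]; exact norm_integral_le_integral_norm _

lemma integral_eq_of_eqOn_cmean [IsFiniteMeasure μ] (hSm : ∀ i, MeasurableSet (S i))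
    (hSd : Pairwise (Function.onFun Disjoint S)) (hScover : ⋃ i, S i = univ)
    (hg : ∀ i, EqOn g (fun _ => cmean μ f (S i)) (S i)) (hf : Integrable f μ) :
    ∫ ω, g ω ∂μ = ∫ ω, f ω ∂μ := by
  have hsum : ∀ {u : Ω → ℝ}, Integrable u μ → ∫ ω, u ω ∂μ = ∑' i, ∫ ω in S i, u ω ∂μ :=
    fun hu => by rw [← integral_iUnion hSm hSd hu.integrableOn, hScover, setIntegral_univ]
  rw [hsum (integrable_of_eqOn_cmean hSm hSd hScover hg hf), hsum hf]
  refine tsum_congr fun i => ?_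
  rw [setIntegral_congr_fun (hSm i) (hg i), setIntegral_const, smul_eq_mul, mul_comm,
    cmean_mul_measureReal]

lemma integral_cmean_fiber [IsFiniteMeasure μ] {α : Type*} [MeasurableSpace α]
    [MeasurableSingletonClass α] {W : Ω → α} (hW : Measurable W) (hWc : (range W).Countable)
    (hf : Integrable f μ) :
    ∫ ω, cmean μ f {ω' | W ω' = W ω} ∂μ = ∫ ω, f ω ∂μ := by
  have : Countable (range W) := hWc.to_subtype
  refine integral_eq_of_eqOn_cmean (S := fun w : range W => W ⁻¹' {(w : α)})
    (fun w => hW (measurableSet_singleton _)) ?_ ?_ (fun w ω hω => ?_) hf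
  · exact fun v w hvw => disjoint_left.2 fun ω hv hw => hvw (Subtype.ext (hv.symm.trans hw))
  · exact eq_univ_of_forall fun ω => mem_iUnion.2 ⟨⟨W ω, mem_range_self ω⟩, rfl⟩
  · simp only [mem_preimage, mem_singleton_iff] at hω
    simp only [hω]
    rfl

end CondMean

section Instrument

variable {Ω : Type} [MeasurableSpace Ω] {ν : Measure Ω} {Z A B Y : Ω → ℝ}

lemma integral_mix_mul_sub_integral [IsProbabilityMeasure ν] (hZm : Measurable Z)
    (hZ : ∀ ω, Z ω = 0 ∨ Z ω = 1) (hA : Integrable A ν) (hB : Integrable B ν)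
    (hAZ : IndepFun A Z ν) (hBZ : IndepFun B Z ν) :
    ∫ ω, (Z ω * A ω + (1 - Z ω) * B ω) * (Z ω - ∫ ω, Z ω ∂ν) ∂ν
      = (∫ ω, Z ω ∂ν) * (1 - ∫ ω, Z ω ∂ν) * (∫ ω, A ω ∂ν - ∫ ω, B ω ∂ν) := by
  set p := ∫ ω, Z ω ∂ν
  have hZA := hAZ.symm.integral_fun_mul_eq_mul_integral hZm.aestronglyMeasurable hA.1
  have hZB := hBZ.symm.integral_fun_mul_eq_mul_integral hZm.aestronglyMeasurable hB.1
  have hpt : ∀ ω, (Z ω * A ω + (1 - Z ω) * B ω) * (Z ω - p)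
      = (1 - p) * (Z ω * A ω) - p * (B ω - Z ω * B ω) := fun ω => by
    rcases hZ ω with h | h <;> rw [h] <;> ring
  have hZAi := hA.binary_mul hZm hZ
  have hZBi := hB.binary_mul hZm hZ
  have hBZBi : Integrable (fun ω => B ω - Z ω * B ω) ν := hB.sub hZBi
  rw [integral_congr_ae (ae_of_all _ hpt), integral_sub (hZAi.const_mul _) (hBZBi.const_mul _),
    integral_const_mul, integral_const_mul, integral_sub hB hZBi, hZA, hZB]
  ring

-- The factor `∫ Z = P(Z = 1)` makes this hold also when `{Z = 1}` is null and `cmean` is `0`.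
lemma integral_mul_cmean_setOf_eq_one [IsFiniteMeasure ν] (hZm : Measurable Z)
    (hZ : ∀ ω, Z ω = 0 ∨ Z ω = 1) (hAm : AEStronglyMeasurable A ν) (hAZ : IndepFun A Z ν)
    (hY : ∀ ω, Y ω = Z ω * A ω + (1 - Z ω) * B ω) :
    (∫ ω, Z ω ∂ν) * cmean ν Y {ω | Z ω = 1} = (∫ ω, Z ω ∂ν) * ∫ ω, A ω ∂ν := by
  have hZ1 : MeasurableSet {ω | Z ω = 1} := hZm (measurableSet_singleton 1)
  have hZ_ind : ∀ ω, {ω | Z ω = 1}.indicator 1 ω = Z ω := fun ω => by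
    rcases hZ ω with h | h <;> simp [h]
  have hYZ_ind : ∀ ω, {ω | Z ω = 1}.indicator Y ω = Z ω * A ω := fun ω => by
    rcases hZ ω with h | h <;> simp [h, hY]
  rw [← hAZ.symm.integral_fun_mul_eq_mul_integral hZm.aestronglyMeasurable hAm,
    ← integral_congr_ae (ae_of_all _ hYZ_ind), integral_indicator hZ1,
    ← integral_congr_ae (ae_of_all _ hZ_ind), integral_indicator_one hZ1, mul_comm,
    cmean_mul_measureReal]

lemma integral_mul_cmean_setOf_eq_zero [IsProbabilityMeasure ν] (hZm : Measurable Z)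
    (hZ : ∀ ω, Z ω = 0 ∨ Z ω = 1) (hBm : AEStronglyMeasurable B ν) (hBZ : IndepFun B Z ν)
    (hY : ∀ ω, Y ω = Z ω * A ω + (1 - Z ω) * B ω) :
    (1 - ∫ ω, Z ω ∂ν) * cmean ν Y {ω | Z ω = 0} = (1 - ∫ ω, Z ω ∂ν) * ∫ ω, B ω ∂ν := by
  have hZi : Integrable Z ν := by
    simpa using (integrable_const (1 : ℝ)).binary_mul hZm hZ
  have hset : {ω | Z ω = 0} = {ω | 1 - Z ω = 1} := by ext; simp
  have h1Z : ∫ ω, (1 - Z ω) ∂ν = 1 - ∫ ω, Z ω ∂ν := by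
    rw [integral_sub (integrable_const 1) hZi, integral_const, probReal_univ, one_smul]
  rw [hset, ← h1Z]
  exact integral_mul_cmean_setOf_eq_one (B := A) (measurable_const.sub hZm)
    (fun ω => by rcases hZ ω with h | h <;> simp [h]) hBm
    (hBZ.comp measurable_id (measurable_const.sub measurable_id)) fun ω => by rw [hY]; ring

end Instrument

section Stratum

variable {Ω : Type} [MeasurableSpace Ω] {ν : Measure Ω} {Z D0 D1 Y0 Y1 D Y X : Ω → ℝ}

lemma integral_sub_eq_setIntegral_supercompliers {k : Ω → ℝ} (hD0m : Measurable D0)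
    (hD1m : Measurable D1) (hY0m : Measurable Y0) (hY1m : Measurable Y1)
    (hD0bin : ∀ ω, D0 ω = 0 ∨ D0 ω = 1) (hD1bin : ∀ ω, D1 ω = 0 ∨ D1 ω = 1)
    (hY0bin : ∀ ω, Y0 ω = 0 ∨ Y0 ω = 1) (hY1bin : ∀ ω, Y1 ω = 0 ∨ Y1 ω = 1)
    (hk : Integrable k ν) (hmonoD : ∀ᵐ ω ∂ν, D0 ω ≤ D1 ω) (hmonoY : ∀ᵐ ω ∂ν, Y0 ω ≤ Y1 ω) :
    ∫ ω, (D1 ω * Y1 ω + (1 - D1 ω) * Y0 ω) * k ω ∂ν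
        - ∫ ω, (D0 ω * Y1 ω + (1 - D0 ω) * Y0 ω) * k ω ∂ν
      = ∫ ω in {ω | D0 ω < D1 ω ∧ Y0 ω < Y1 ω}, k ω ∂ν := by
  have hC : MeasurableSet {ω | D0 ω < D1 ω ∧ Y0 ω < Y1 ω} :=
    (measurableSet_lt hD0m hD1m).inter (measurableSet_lt hY0m hY1m)
  rw [← integral_sub
      (hk.binary_mul (by fun_prop) fun ω => mix_eq_zero_or_one (hD1bin ω) (hY1bin ω) (hY0bin ω))
      (hk.binary_mul (by fun_prop) fun ω => mix_eq_zero_or_one (hD0bin ω) (hY1bin ω) (hY0bin ω)),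
    ← integral_indicator hC]
  refine integral_congr_ae ?_
  filter_upwards [hmonoD, hmonoY] with ω hd hy
  rw [← sub_mul, mix_sub_mix_eq_ite (hD0bin ω) (hD1bin ω) (hY0bin ω) (hY1bin ω) hd hy]
  simp only [indicator_apply, mem_ofPred_eq, ite_mul, one_mul, zero_mul]

variable [IsProbabilityMeasure ν]

lemma integral_mul_mul_sub_integral_eq_supercompliers (hZm : Measurable Z)
    (hD0m : Measurable D0) (hD1m : Measurable D1) (hY0m : Measurable Y0) (hY1m : Measurable Y1)
    (hZbin : ∀ ω, Z ω = 0 ∨ Z ω = 1)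
    (hD0bin : ∀ ω, D0 ω = 0 ∨ D0 ω = 1) (hD1bin : ∀ ω, D1 ω = 0 ∨ D1 ω = 1)
    (hY0bin : ∀ ω, Y0 ω = 0 ∨ Y0 ω = 1) (hY1bin : ∀ ω, Y1 ω = 0 ∨ Y1 ω = 1)
    (hD : ∀ ω, D ω = Z ω * D1 ω + (1 - Z ω) * D0 ω)
    (hY : ∀ ω, Y ω = D ω * Y1 ω + (1 - D ω) * Y0 ω)
    {φ : ℝ → ℝ} (hφm : Measurable φ) (hφ : Integrable (fun ω => φ (X ω)) ν)
    (hind : IndepFun (fun ω => (X ω, Y0 ω, Y1 ω, D0 ω, D1 ω)) Z ν)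
    (hmonoD : ∀ᵐ ω ∂ν, D0 ω ≤ D1 ω) (hmonoY : ∀ᵐ ω ∂ν, Y0 ω ≤ Y1 ω) :
    ∫ ω, φ (X ω) * Y ω * (Z ω - ∫ ω, Z ω ∂ν) ∂ν
      = (∫ ω, Z ω ∂ν) * (1 - ∫ ω, Z ω ∂ν)
          * ∫ ω in {ω | D0 ω < D1 ω ∧ Y0 ω < Y1 ω}, φ (X ω) ∂ν := by
  have hA : IndepFun (fun ω => (D1 ω * Y1 ω + (1 - D1 ω) * Y0 ω) * φ (X ω)) Z ν :=
    hind.comp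
      (φ := fun v : ℝ × ℝ × ℝ × ℝ × ℝ => (v.2.2.2.2 * v.2.2.1 + (1 - v.2.2.2.2) * v.2.1) * φ v.1)
      (by fun_prop) measurable_id
  have hB : IndepFun (fun ω => (D0 ω * Y1 ω + (1 - D0 ω) * Y0 ω) * φ (X ω)) Z ν :=
    hind.comp
      (φ := fun v : ℝ × ℝ × ℝ × ℝ × ℝ => (v.2.2.2.1 * v.2.2.1 + (1 - v.2.2.2.1) * v.2.1) * φ v.1)
      (by fun_prop) measurable_id
  rw [← integral_sub_eq_setIntegral_supercompliers hD0m hD1m hY0m hY1m hD0bin hD1bin hY0bin hY1bin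
      hφ hmonoD hmonoY,
    ← integral_mix_mul_sub_integral hZm hZbin
      (hφ.binary_mul (by fun_prop) fun ω => mix_eq_zero_or_one (hD1bin ω) (hY1bin ω) (hY0bin ω))
      (hφ.binary_mul (by fun_prop) fun ω => mix_eq_zero_or_one (hD0bin ω) (hY1bin ω) (hY0bin ω))
      hA hB]
  refine integral_congr_ae (ae_of_all _ fun ω => ?_)
  simp only [hY, hD, mix_mix_eq_of_binary (hZbin ω)]
  ring

lemma reducedForm_mul_eq_measureReal_supercompliers (hZm : Measurable Z) (hD0m : Measurable D0)
    (hD1m : Measurable D1) (hY0m : Measurable Y0) (hY1m : Measurable Y1)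
    (hZbin : ∀ ω, Z ω = 0 ∨ Z ω = 1)
    (hD0bin : ∀ ω, D0 ω = 0 ∨ D0 ω = 1) (hD1bin : ∀ ω, D1 ω = 0 ∨ D1 ω = 1)
    (hY0bin : ∀ ω, Y0 ω = 0 ∨ Y0 ω = 1) (hY1bin : ∀ ω, Y1 ω = 0 ∨ Y1 ω = 1)
    (hD : ∀ ω, D ω = Z ω * D1 ω + (1 - Z ω) * D0 ω)
    (hY : ∀ ω, Y ω = D ω * Y1 ω + (1 - D ω) * Y0 ω)
    (hind : IndepFun (fun ω => (X ω, Y0 ω, Y1 ω, D0 ω, D1 ω)) Z ν)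
    (hmonoD : ∀ᵐ ω ∂ν, D0 ω ≤ D1 ω) (hmonoY : ∀ᵐ ω ∂ν, Y0 ω ≤ Y1 ω) :
    (cmean ν Y {ω | Z ω = 1} - cmean ν Y {ω | Z ω = 0}) * (1 - ∫ ω, Z ω ∂ν) * ∫ ω, Z ω ∂ν
      = (∫ ω, Z ω ∂ν) * (1 - ∫ ω, Z ω ∂ν) * ν.real {ω | D0 ω < D1 ω ∧ Y0 ω < Y1 ω} := by
  have hYmix : ∀ ω, Y ω = Z ω * (D1 ω * Y1 ω + (1 - D1 ω) * Y0 ω)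
      + (1 - Z ω) * (D0 ω * Y1 ω + (1 - D0 ω) * Y0 ω) := fun ω => by
    rw [hY, hD, mix_mix_eq_of_binary (hZbin ω)]
  have hA : IndepFun (fun ω => D1 ω * Y1 ω + (1 - D1 ω) * Y0 ω) Z ν :=
    hind.comp (φ := fun v : ℝ × ℝ × ℝ × ℝ × ℝ => v.2.2.2.2 * v.2.2.1 + (1 - v.2.2.2.2) * v.2.1)
      (by fun_prop) measurable_id
  have hB : IndepFun (fun ω => D0 ω * Y1 ω + (1 - D0 ω) * Y0 ω) Z ν :=
    hind.comp (φ := fun v : ℝ × ℝ × ℝ × ℝ × ℝ => v.2.2.2.1 * v.2.2.1 + (1 - v.2.2.2.1) * v.2.1)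
      (by fun_prop) measurable_id
  have h1 := integral_mul_cmean_setOf_eq_one hZm hZbin (by fun_prop) hA hYmix
  have h0 := integral_mul_cmean_setOf_eq_zero hZm hZbin (by fun_prop) hB hYmix
  have hC := integral_sub_eq_setIntegral_supercompliers (k := fun _ => 1) hD0m hD1m hY0m hY1m
    hD0bin hD1bin hY0bin hY1bin (integrable_const 1) hmonoD hmonoY
  simp only [mul_one, setIntegral_const, smul_eq_mul] at hC
  linear_combination (1 - ∫ ω, Z ω ∂ν) * h1 - (∫ ω, Z ω ∂ν) * h0
    + (∫ ω, Z ω ∂ν) * (1 - ∫ ω, Z ω ∂ν) * hC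

end Stratum

theorem cmean_stratum_identification {Ω : Type} [MeasurableSpace Ω] {μ : Measure Ω}
    [IsFiniteMeasure μ] {Z D0 D1 Y0 Y1 D Y X : Ω → ℝ} {s : Set Ω} (hs : MeasurableSet s)
    (hμs : μ s ≠ 0) (hZm : Measurable Z) (hD0m : Measurable D0) (hD1m : Measurable D1)
    (hY0m : Measurable Y0) (hY1m : Measurable Y1)
    (hZbin : ∀ ω, Z ω = 0 ∨ Z ω = 1)
    (hD0bin : ∀ ω, D0 ω = 0 ∨ D0 ω = 1) (hD1bin : ∀ ω, D1 ω = 0 ∨ D1 ω = 1)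
    (hY0bin : ∀ ω, Y0 ω = 0 ∨ Y0 ω = 1) (hY1bin : ∀ ω, Y1 ω = 0 ∨ Y1 ω = 1)
    (hD : ∀ ω, D ω = Z ω * D1 ω + (1 - Z ω) * D0 ω)
    (hY : ∀ ω, Y ω = D ω * Y1 ω + (1 - D ω) * Y0 ω)
    {φ : ℝ → ℝ} (hφm : Measurable φ) (hφ : Integrable (fun ω => φ (X ω)) μ)
    (hind : IndepFun (fun ω => (X ω, Y0 ω, Y1 ω, D0 ω, D1 ω)) Z μ[|s])
    (hmonoD : ∀ᵐ ω ∂μ, D0 ω ≤ D1 ω) (hmonoY : ∀ᵐ ω ∂μ, Y0 ω ≤ Y1 ω)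
    {e : Ω → ℝ} {p RF cc : ℝ} (hp : p = cmean μ Z s) (he : ∀ ω ∈ s, e ω = p)
    (hRF : RF = cmean μ Y (s ∩ {ω | Z ω = 1}) - cmean μ Y (s ∩ {ω | Z ω = 0}))
    (hcc : cc = cmean μ (fun ω => φ (X ω)) ({ω | D0 ω < D1 ω ∧ Y0 ω < Y1 ω} ∩ s)) :
    cmean μ (fun ω => φ (X ω) * Y ω * (Z ω - e ω)) s = RF * (1 - p) * p * cc
      ∧ cmean μ (fun ω => Y ω * (Z ω - e ω)) s = RF * (1 - p) * p := by
  have : IsProbabilityMeasure μ[|s] := cond_isProbabilityMeasure hμs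
  have hcentred : ∀ G : Ω → ℝ,
      cmean μ (fun ω => G ω * (Z ω - e ω)) s = ∫ ω, G ω * (Z ω - p) ∂μ[|s] := fun G => by
    rw [cmean_eq_integral_cond]
    exact integral_congr_ae ((ae_cond_mem hs).mono fun ω hω => by simp only [he ω hω])
  have hφs : Integrable (fun ω => φ (X ω)) μ[|s] := by
    rw [ProbabilityTheory.cond]
    exact hφ.integrableOn.smul_measure (ENNReal.inv_ne_top.mpr hμs)
  have hmonoDs := (cond_absolutelyContinuous (s := s)).ae_le hmonoD
  have hmonoYs := (cond_absolutelyContinuous (s := s)).ae_le hmonoY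
  have hrf := reducedForm_mul_eq_measureReal_supercompliers hZm hD0m hD1m hY0m hY1m hZbin
    hD0bin hD1bin hY0bin hY1bin hD hY hind hmonoDs hmonoYs
  have hnum := integral_mul_mul_sub_integral_eq_supercompliers hZm hD0m hD1m hY0m hY1m hZbin
    hD0bin hD1bin hY0bin hY1bin hD hY hφm hφs hind hmonoDs hmonoYs
  have hden := integral_mul_mul_sub_integral_eq_supercompliers hZm hD0m hD1m hY0m hY1m hZbin
    hD0bin hD1bin hY0bin hY1bin hD hY measurable_const (integrable_const 1) hind hmonoDs hmonoYs
  have hZ1 : MeasurableSet {ω | Z ω = 1} := hZm (measurableSet_singleton 1)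
  have hZ0 : MeasurableSet {ω | Z ω = 0} := hZm (measurableSet_singleton 0)
  have hC : MeasurableSet {ω | D0 ω < D1 ω ∧ Y0 ω < Y1 ω} :=
    (measurableSet_lt hD0m hD1m).inter (measurableSet_lt hY0m hY1m)
  have hp' : p = ∫ ω, Z ω ∂μ[|s] := hp.trans (cmean_eq_integral_cond μ Z s)
  have hRF' : RF = cmean μ[|s] Y {ω | Z ω = 1} - cmean μ[|s] Y {ω | Z ω = 0} := by
    rw [hRF, cmean_cond hs hZ1, cmean_cond hs hZ0]
  have hcc' : cc = cmean μ[|s] (fun ω => φ (X ω)) {ω | D0 ω < D1 ω ∧ Y0 ω < Y1 ω} := by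
    rw [hcc, cmean_cond hs hC, inter_comm]
  rw [hcentred, hcentred]
  subst hp' hRF' hcc'
  refine ⟨?_, ?_⟩
  · rw [hnum, hrf, ← cmean_mul_measureReal]
    ring
  · simpa [hrf] using hden

theorem stratified_nonnegative_weights_general
    {Ω : Type} [MeasurableSpace Ω] (μ : Measure Ω) [IsProbabilityMeasure μ]
    (Z D0 D1 Y0 Y1 D Y X W : Ω → ℝ)
    (hZm : Measurable Z) (hD0m : Measurable D0) (hD1m : Measurable D1)
    (hY0m : Measurable Y0) (hY1m : Measurable Y1)
    (hWm : Measurable W) (hWcnt : (Set.range W).Countable)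
    (hZbin : ∀ ω, Z ω = 0 ∨ Z ω = 1)
    (hD0bin : ∀ ω, D0 ω = 0 ∨ D0 ω = 1)
    (hD1bin : ∀ ω, D1 ω = 0 ∨ D1 ω = 1)
    (hY0bin : ∀ ω, Y0 ω = 0 ∨ Y0 ω = 1)
    (hY1bin : ∀ ω, Y1 ω = 0 ∨ Y1 ω = 1)
    (hD : ∀ ω, D ω = Z ω * D1 ω + (1 - Z ω) * D0 ω)
    (hY : ∀ ω, Y ω = D ω * Y1 ω + (1 - D ω) * Y0 ω)
    (h : ℝ → ℝ) (hhm : Measurable h)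
    (hint : Integrable (fun ω => h (X ω)) μ)
    -- conditional independence given each stratum of W
    (hcind : ∀ w : ℝ, μ {ω | W ω = w} ≠ 0 →
      IndepFun (fun ω => (X ω, Y0 ω, Y1 ω, D0 ω, D1 ω)) Z (μ[|{ω | W ω = w}]))
    -- treatment and outcome monotonicity
    (hmonoD : ∀ᵐ ω ∂μ, D0 ω ≤ D1 ω)
    (hmonoY : ∀ᵐ ω ∂μ, Y0 ω ≤ Y1 ω)
    -- E[Z|W] as a function of W, and the saturation (linear projection) condition
    (e : Ω → ℝ) (he : ∀ ω, e ω = cmean μ Z {ω' | W ω' = W ω})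
    -- conditional reduced form RF_W
    (RFw : Ω → ℝ)
    (hRFw : ∀ ω, RFw ω
      = cmean μ Y ({ω' | W ω' = W ω} ∩ {ω' | Z ω' = 1})
        - cmean μ Y ({ω' | W ω' = W ω} ∩ {ω' | Z ω' = 0}))
    (hRFnonneg : ∀ ω, 0 ≤ RFw ω)
    -- the stratum weight and the conditional supercomplier characteristic
    (wgt cchar : Ω → ℝ)
    (hwgt : ∀ ω, wgt ω = RFw ω * (1 - e ω) * e ω)
    (hcchar : ∀ ω, cchar ω
      = cmean μ (fun ω' => h (X ω'))
          ({ω' | D0 ω' < D1 ω' ∧ Y0 ω' < Y1 ω'} ∩ {ω' | W ω' = W ω})) :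
    ((∫ ω, h (X ω) * Y ω * (Z ω - e ω) ∂μ) / (∫ ω, Y ω * (Z ω - e ω) ∂μ)
      = (∫ ω, wgt ω * cchar ω ∂μ) / (∫ ω, wgt ω ∂μ))
    ∧ (∀ ω, 0 ≤ wgt ω) := by
  have hZ01 : ∀ ω, Z ω ∈ Icc (0 : ℝ) 1 := fun ω => mem_Icc_of_binary (hZbin ω)
  have hY01 : ∀ ω, Y ω ∈ Icc (0 : ℝ) 1 := fun ω => mem_Icc_of_binary <| hY ω ▸
    mix_eq_zero_or_one (hD ω ▸ mix_eq_zero_or_one (hZbin ω) (hD1bin ω) (hD0bin ω))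
      (hY1bin ω) (hY0bin ω)
  have he01 : ∀ ω, e ω ∈ Icc (0 : ℝ) 1 := fun ω => he ω ▸ cmean_mem_Icc hZm hZ01 _
  refine ⟨?_, fun ω => hwgt ω ▸
    mul_nonneg (mul_nonneg (hRFnonneg ω) (sub_nonneg.2 (he01 ω).2)) (he01 ω).1⟩
  have hfiber : ∀ ω₀,
      cmean μ (fun ω => h (X ω) * Y ω * (Z ω - e ω)) {ω | W ω = W ω₀} = wgt ω₀ * cchar ω₀
        ∧ cmean μ (fun ω => Y ω * (Z ω - e ω)) {ω | W ω = W ω₀} = wgt ω₀ := by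
    intro ω₀
    rcases eq_or_ne (μ {ω | W ω = W ω₀}) 0 with h0 | h0
    · -- on a null stratum every `cmean` is the junk value `0`, so `e` and the weight vanish
      simp [cmean_of_measure_eq_zero h0, hwgt, he ω₀]
    rw [hwgt]
    exact cmean_stratum_identification (hWm (measurableSet_singleton _)) h0 hZm hD0m hD1m
      hY0m hY1m hZbin hD0bin hD1bin hY0bin hY1bin hD hY hhm hint (hcind _ h0) hmonoD hmonoY
      (he ω₀) (fun ω (hω : W ω = W ω₀) => by rw [he ω, he ω₀, hω]) (hRFw ω₀) (hcchar ω₀)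
  have hYm : Measurable Y := by
    simp only [funext hY, funext hD]
    fun_prop
  have hem : Measurable e := by
    simpa only [← funext he] using
      hWm.comp_of_countable_range hWcnt fun w => cmean μ Z {ω' | W ω' = w}
  have hnum := hint.mul_mul_sub_of_mem_Icc hYm hZm hem hY01 hZ01 he01
  have hden := (integrable_const (μ := μ) (1 : ℝ)).mul_mul_sub_of_mem_Icc hYm hZm hem hY01 hZ01
    he01
  simp only [one_mul] at hden
  rw [← integral_cmean_fiber hWm hWcnt hnum, ← integral_cmean_fiber hWm hWcnt hden]
  congr 1 <;> exact integral_congr_ae (ae_of_all _ fun ω => by simp only [hfiber])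

theorem stratified_nonnegative_weights
    {Ω : Type} [MeasurableSpace Ω] (μ : Measure Ω) [IsProbabilityMeasure μ]
    (Z D0 D1 Y0 Y1 D Y X W : Ω → ℝ)
    (hZm : Measurable Z) (hD0m : Measurable D0) (hD1m : Measurable D1)
    (hY0m : Measurable Y0) (hY1m : Measurable Y1) (hXm : Measurable X)
    (hWm : Measurable W) (hWcnt : (Set.range W).Countable)
    (hZbin : ∀ ω, Z ω = 0 ∨ Z ω = 1)
    (hD0bin : ∀ ω, D0 ω = 0 ∨ D0 ω = 1)
    (hD1bin : ∀ ω, D1 ω = 0 ∨ D1 ω = 1)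
    (hY0bin : ∀ ω, Y0 ω = 0 ∨ Y0 ω = 1)
    (hY1bin : ∀ ω, Y1 ω = 0 ∨ Y1 ω = 1)
    (hD : ∀ ω, D ω = Z ω * D1 ω + (1 - Z ω) * D0 ω)
    (hY : ∀ ω, Y ω = D ω * Y1 ω + (1 - D ω) * Y0 ω)
    (h : ℝ → ℝ) (hhm : Measurable h)
    (hint : Integrable (fun ω => h (X ω)) μ)
    -- conditional independence given each stratum of W
    (hcind : ∀ w : ℝ, μ {ω | W ω = w} ≠ 0 →
      IndepFun (fun ω => (X ω, Y0 ω, Y1 ω, D0 ω, D1 ω)) Z (μ[|{ω | W ω = w}]))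
    -- overlap within each stratum: 0 < P(Z=1|W) < 1
    (hoverlap : ∀ w : ℝ, μ {ω | W ω = w} ≠ 0 →
      0 < μ ({ω | Z ω = 1} ∩ {ω | W ω = w})
        ∧ μ ({ω | Z ω = 1} ∩ {ω | W ω = w}) < μ {ω | W ω = w})
    -- treatment and outcome monotonicity
    (hmonoD : ∀ᵐ ω ∂μ, D0 ω ≤ D1 ω)
    (hmonoY : ∀ᵐ ω ∂μ, Y0 ω ≤ Y1 ω)
    -- E[Z|W] as a function of W, and the saturation (linear projection) condition
    (e : Ω → ℝ) (he : ∀ ω, e ω = cmean μ Z {ω' | W ω' = W ω})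
    (hlin : ∃ a b : ℝ, ∀ ω, e ω = a + b * W ω)
    -- conditional reduced form RF_W
    (RFw : Ω → ℝ)
    (hRFw : ∀ ω, RFw ω
      = cmean μ Y ({ω' | W ω' = W ω} ∩ {ω' | Z ω' = 1})
        - cmean μ Y ({ω' | W ω' = W ω} ∩ {ω' | Z ω' = 0}))
    (hRFnonneg : ∀ ω, 0 ≤ RFw ω)
    (hRFpos : ∃ ω, μ {ω' | W ω' = W ω} ≠ 0 ∧ 0 < RFw ω)
    -- positive supercomplier share in strata with positive reduced form
    (hccpos : ∀ w : ℝ, μ {ω | W ω = w} ≠ 0 →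
      (∀ ω, W ω = w → 0 < RFw ω) →
      0 < μ ({ω | D0 ω < D1 ω ∧ Y0 ω < Y1 ω} ∩ {ω | W ω = w}))
    -- the stratum weight and the conditional supercomplier characteristic
    (wgt cchar : Ω → ℝ)
    (hwgt : ∀ ω, wgt ω = RFw ω * (1 - e ω) * e ω)
    (hcchar : ∀ ω, cchar ω
      = cmean μ (fun ω' => h (X ω'))
          ({ω' | D0 ω' < D1 ω' ∧ Y0 ω' < Y1 ω'} ∩ {ω' | W ω' = W ω})) :
    ((∫ ω, h (X ω) * Y ω * (Z ω - e ω) ∂μ) / (∫ ω, Y ω * (Z ω - e ω) ∂μ)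
      = (∫ ω, wgt ω * cchar ω ∂μ) / (∫ ω, wgt ω ∂μ))
    ∧ (∀ ω, 0 ≤ wgt ω) :=
  stratified_nonnegative_weights_general μ Z D0 D1 Y0 Y1 D Y X W hZm hD0m hD1m hY0m hY1m hWm hWcnt
    hZbin hD0bin hD1bin hY0bin hY1bin hD hY h hhm hint hcind hmonoD hmonoY e he RFw hRFw hRFnonneg
    wgt cchar hwgt hcchar
end

section
/- Non-identifiability of the always-taker outcome strata: there exist two distinct joint distributions of (Y1, Y0, D1, D0, Z), each binary and each satisfying random assignment, treatment monotonicity, and outcome monotonicity, that induce the same observed distribution of (Y, D, Z) but have different values of Pr(D0 = D1 = 1, Y0 = Y1 = 1). -/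
open MeasureTheory ProbabilityTheory

/-- Coordinates of the latent space `(Y₁, Y₀, D₁, D₀, Z)`. -/
noncomputable abbrev lY1 (q : ℝ × ℝ × ℝ × ℝ × ℝ) : ℝ := q.1
noncomputable abbrev lY0 (q : ℝ × ℝ × ℝ × ℝ × ℝ) : ℝ := q.2.1
noncomputable abbrev lD1 (q : ℝ × ℝ × ℝ × ℝ × ℝ) : ℝ := q.2.2.1
noncomputable abbrev lD0 (q : ℝ × ℝ × ℝ × ℝ × ℝ) : ℝ := q.2.2.2.1
noncomputable abbrev lZ (q : ℝ × ℝ × ℝ × ℝ × ℝ) : ℝ := q.2.2.2.2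

/-- Observed treatment induced by the latent variables. -/
noncomputable def lD (q : ℝ × ℝ × ℝ × ℝ × ℝ) : ℝ :=
  lZ q * lD1 q + (1 - lZ q) * lD0 q

/-- Observed (Y, D, Z) induced by the latent variables. -/
noncomputable def obsMap (q : ℝ × ℝ × ℝ × ℝ × ℝ) : ℝ × ℝ × ℝ :=
  (lD q * lY1 q + (1 - lD q) * lY0 q, lD q, lZ q)

/-- A latent distribution satisfying random assignment, treatment monotonicity,
and outcome monotonicity, with a nondegenerate instrument. -/
def ValidLatent (ν : Measure (ℝ × ℝ × ℝ × ℝ × ℝ)) : Prop :=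
  IsProbabilityMeasure ν
  ∧ (∀ᵐ q ∂ν, (lY1 q = 0 ∨ lY1 q = 1) ∧ (lY0 q = 0 ∨ lY0 q = 1)
      ∧ (lD1 q = 0 ∨ lD1 q = 1) ∧ (lD0 q = 0 ∨ lD0 q = 1)
      ∧ (lZ q = 0 ∨ lZ q = 1))
  ∧ IndepFun (fun q => (lY1 q, lY0 q, lD1 q, lD0 q)) lZ ν
  ∧ 0 < ν {q | lZ q = 1} ∧ ν {q | lZ q = 1} < 1
  ∧ (∀ᵐ q ∂ν, lD0 q ≤ lD1 q)
  ∧ (∀ᵐ q ∂ν, lY0 q ≤ lY1 q)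

/-!
An always-taker has `D = 1` whatever the value of `Z`, so its `Y0` is never observed. A
population made only of always-takers with `Y1 = 1` therefore produces the same law of
`(Y, D, Z)` whether `Y0 = 1` or `Y0 = 0`, while its share of the stratum
`{D0 = D1 = 1, Y0 = Y1 = 1}` is `1` in the first case and `0` in the second.
-/

section UniformPair

variable {α β γ : Type*} [MeasurableSpace α] [MeasurableSpace β] [MeasurableSpace γ]

noncomputable def uniformPair (a b : α) : Measure α :=
  (2 : ENNReal)⁻¹ • (Measure.dirac a + Measure.dirac b)

instance (a b : α) : IsProbabilityMeasure (uniformPair a b) := by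
  constructor
  simp [uniformPair, ← two_mul, ENNReal.mul_inv_cancel]

lemma uniformPair_apply [MeasurableSingletonClass α] (a b : α) (s : Set α) :
    uniformPair a b s = 2⁻¹ * (s.indicator 1 a + s.indicator 1 b) := by
  simp [uniformPair, Measure.dirac_apply, mul_add]

lemma ae_uniformPair_iff [MeasurableSingletonClass α] {a b : α} {p : α → Prop} :
    (∀ᵐ x ∂uniformPair a b, p x) ↔ p a ∧ p b := by
  rw [uniformPair, Measure.ae_ennreal_smul_measure_iff (by norm_num), ae_add_measure_iff,
    ae_dirac_eq, ae_dirac_eq]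
  simp

lemma map_uniformPair {f : α → β} (hf : Measurable f) (a b : α) :
    (uniformPair a b).map f = uniformPair (f a) (f b) := by
  simp [uniformPair, Measure.map_smul, Measure.map_add _ _ hf, Measure.map_dirac' hf]

lemma indepFun_uniformPair [MeasurableSingletonClass α] {a b : α} {f : α → β} (g : α → γ)
    (hf : f a = f b) : IndepFun f g (uniformPair a b) :=
  (indepFun_const_left (f a) g).congr (ae_uniformPair_iff.2 ⟨rfl, hf⟩) .rfl

end UniformPair

/-- A population of a single principal stratum `(y1, y0, d1, d0)` with a fair-coin instrument. -/
noncomputable def typeLaw (y1 y0 d1 d0 : ℝ) : Measure (ℝ × ℝ × ℝ × ℝ × ℝ) :=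
  uniformPair (y1, y0, d1, d0, 0) (y1, y0, d1, d0, 1)

lemma typeLaw_instrument_eq_one (y1 y0 d1 d0 : ℝ) :
    typeLaw y1 y0 d1 d0 {q | lZ q = 1} = 2⁻¹ := by
  rw [typeLaw, uniformPair_apply]
  norm_num [Set.indicator_apply]

lemma validLatent_typeLaw {y1 y0 d1 d0 : ℝ} (hy1 : y1 = 0 ∨ y1 = 1) (hy0 : y0 = 0 ∨ y0 = 1)
    (hd1 : d1 = 0 ∨ d1 = 1) (hd0 : d0 = 0 ∨ d0 = 1) (hd : d0 ≤ d1) (hy : y0 ≤ y1) :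
    ValidLatent (typeLaw y1 y0 d1 d0) := by
  refine ⟨inferInstanceAs (IsProbabilityMeasure (uniformPair _ _)), ae_uniformPair_iff.2 ?_,
    indepFun_uniformPair _ rfl, ?_, ?_, ae_uniformPair_iff.2 ⟨hd, hd⟩, ae_uniformPair_iff.2 ⟨hy, hy⟩⟩
  · simp [hy1, hy0, hd1, hd0]
  all_goals rw [typeLaw_instrument_eq_one]; norm_num

lemma map_obsMap_typeLaw_always_taker (y1 y0 : ℝ) :
    (typeLaw y1 y0 1 1).map obsMap = uniformPair (y1, 1, 0) (y1, 1, 1) := by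
  rw [typeLaw, map_uniformPair (by unfold obsMap lD; fun_prop)]
  norm_num [obsMap, lD]

lemma typeLaw_always_taker_one_one :
    typeLaw 1 1 1 1 {q | lD0 q = 1 ∧ lD1 q = 1 ∧ lY0 q = 1 ∧ lY1 q = 1} = 1 := by
  rw [typeLaw, uniformPair_apply]
  norm_num [Set.indicator_apply, ENNReal.inv_mul_cancel]

lemma typeLaw_always_taker_one_zero :
    typeLaw 1 0 1 1 {q | lD0 q = 1 ∧ lD1 q = 1 ∧ lY0 q = 1 ∧ lY1 q = 1} = 0 := by
  rw [typeLaw, uniformPair_apply]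
  norm_num [Set.indicator_apply]

theorem always_taker_share_not_identified :
    ∃ ν₁ ν₂ : Measure (ℝ × ℝ × ℝ × ℝ × ℝ),
      ValidLatent ν₁ ∧ ValidLatent ν₂
      ∧ Measure.map obsMap ν₁ = Measure.map obsMap ν₂
      ∧ ν₁ {q | lD0 q = 1 ∧ lD1 q = 1 ∧ lY0 q = 1 ∧ lY1 q = 1}
        ≠ ν₂ {q | lD0 q = 1 ∧ lD1 q = 1 ∧ lY0 q = 1 ∧ lY1 q = 1} := by
  refine ⟨typeLaw 1 1 1 1, typeLaw 1 0 1 1, ?_, ?_, ?_, ?_⟩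
  · exact validLatent_typeLaw (by norm_num) (by norm_num) (by norm_num) (by norm_num) le_rfl le_rfl
  · exact validLatent_typeLaw (by norm_num) (by norm_num) (by norm_num) (by norm_num) le_rfl
      zero_le_one
  · rw [map_obsMap_typeLaw_always_taker, map_obsMap_typeLaw_always_taker]
  · rw [typeLaw_always_taker_one_one, typeLaw_always_taker_one_zero]
    exact one_ne_zero
end
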